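/- Let d ≥ 1 and r ≥ 3 be integers, let V ⊂ ℝ^N be a finite set with |V| ≥ (r-1)(d+1)+1, and let P = conv V. Assume P is (d+1)-neighborly with vertex set V: for every nonempty S ⊆ V with |S| ≤ d+1, the set conv S is a face of P. Then for every affine map f : ℝ^N → ℝ^d there exist r pairwise disjoint faces F_1, …, F_r of P whose images f(F_1), …, f(F_r) have a common point; moreover one may take F_j = conv S_j for pairwise disjoint nonempty subsets S_1, …, S_r ⊆ V each of size at most d+1. -/

import Mathlib

/-!
Sarkaria's proof of Tverberg's theorem. Lift each point `p i ∈ ℝ^d` to `(p i, 1)` and tensor it with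
each of `r` vectors of `ℝ^(r-1)` whose only linear relation is that they sum to zero, so that the
`r` tensors of a point have `0` in their convex hull. Bárány's colourful Carathéodory theorem in
dimension `(r-1)(d+1)` chooses one tensor per point with `0` still in the hull of the choice; read
through the unique relation, this convex combination says that the `r` classes of points have equal
weighted sums of lifts, so their convex hulls share a point. Carathéodory's theorem shrinks every
class to at most `d+1` points, and neighbourliness makes the hulls of the classes faces.

Colourful Carathéodory: take a transversal whose hull is nearest to `0`, with nearest point `z`. If
`z ≠ 0`, then `z` lies in the hull of at most `dim` transversal points, those on the supporting
hyperplane `⟪z, ·⟫ = ‖z‖²`; replacing the point of an unused colour by a point `y` of that colour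
with `⟪z, y⟫ ≤ 0` gives a hull strictly closer to `0`.
-/

open Module Metric Set

section Convex

variable {E F : Type*} [AddCommGroup E] [Module ℝ E] [AddCommGroup F] [Module ℝ F]

lemma exists_weights_of_mem_convexHull_range {ι : Type*} [Fintype ι] {p : ι → E} {x : E}
    (hx : x ∈ convexHull ℝ (range p)) :
    ∃ w : ι → ℝ, (∀ i, 0 ≤ w i) ∧ ∑ i, w i = 1 ∧ ∑ i, w i • p i = x := by
  classical
  rw [convexHull_range_eq_exists_affineCombination] at hx
  obtain ⟨s, w, hw₀, hw₁, rfl⟩ := hx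
  refine ⟨fun i => if i ∈ s then w i else 0, fun i => ?_, ?_, ?_⟩
  · dsimp only
    split_ifs with h
    exacts [hw₀ i h, le_rfl]
  · rwa [Finset.sum_ite_mem, Finset.univ_inter]
  · simp only [ite_smul, zero_smul, Finset.sum_ite_mem, Finset.univ_inter,
      Finset.affineCombination_eq_linear_combination s p w hw₁]

lemma zero_mem_convexHull_range_of_sum_eq_zero {κ : Type*} [Fintype κ] [Nonempty κ] {v : κ → E}
    (hv : ∑ k, v k = 0) : (0 : E) ∈ convexHull ℝ (range v) := by
  have h := Finset.univ.centerMass_mem_convexHull (w := fun _ => (1 : ℝ)) (z := v)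
    (fun _ _ => zero_le_one) (by simpa using Fintype.card_pos) (fun k _ => mem_range_self k)
  simpa [Finset.centerMass, hv] using h

lemma zero_mem_convexHull_image_iff (e : E ≃ₗ[ℝ] F) (s : Set E) :
    (0 : F) ∈ convexHull ℝ (e '' s) ↔ (0 : E) ∈ convexHull ℝ s := by
  have h := (e : E →ₗ[ℝ] F).image_convexHull s
  rw [LinearEquiv.coe_coe] at h
  rw [← h, e.image_eq_preimage_symm, Set.mem_preimage, map_zero]

lemma mem_convexHull_image_of_le {ι : Type*} {p : ι → E} {φ : E →ₗ[ℝ] ℝ} {c : ℝ} {x : E}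
    (hp : ∀ i, c ≤ φ (p i)) (hx : x ∈ convexHull ℝ (range p)) (hφx : φ x ≤ c) :
    x ∈ convexHull ℝ (p '' {i | φ (p i) = c}) := by
  obtain ⟨κ, _, z, w, hzp, -, hw₀, hw₁, rfl⟩ := eq_pos_convex_span_of_mem_convexHull hx
  choose i hi using fun k => hzp (mem_range_self k)
  have hterm : ∀ k, 0 ≤ w k * (φ (z k) - c) := fun k =>
    mul_nonneg (hw₀ k).le (sub_nonneg.2 (hi k ▸ hp (i k)))
  have hsum : ∑ k, w k * (φ (z k) - c) = 0 := by
    refine le_antisymm ?_ (Finset.sum_nonneg fun k _ => hterm k)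
    simpa [mul_sub, Finset.sum_sub_distrib, ← Finset.sum_mul, hw₁] using hφx
  refine mem_convexHull_of_exists_fintype w z (fun k => (hw₀ k).le) hw₁
    (fun k => ⟨i k, ?_, hi k⟩) rfl
  have := (Finset.sum_eq_zero_iff_of_nonneg fun k _ => hterm k).1 hsum k (Finset.mem_univ k)
  rw [mem_ofPred_eq, hi k]
  exact sub_eq_zero.1 ((mul_eq_zero.1 this).resolve_left (hw₀ k).ne')

lemma exists_finset_card_le_mem_convexHull_image [FiniteDimensional ℝ E] {ι : Type*}
    {p : ι → E} {s : Set ι} {A : AffineSubspace ℝ E} {x : E} (hA : p '' s ⊆ A)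
    (hx : x ∈ convexHull ℝ (p '' s)) :
    ∃ t : Finset ι, ↑t ⊆ s ∧ t.card ≤ finrank ℝ A.direction + 1 ∧ x ∈ convexHull ℝ (p '' t) := by
  classical
  rw [convexHull_eq_union] at hx
  simp only [mem_iUnion] at hx
  obtain ⟨T, hTs, hT, hxT⟩ := hx
  obtain ⟨t, hts, hinj, rfl⟩ := Finset.exists_subset_injOn_image_eq_of_surjOn s T hTs
  refine ⟨t, hts, ?_, by rwa [Finset.coe_image] at hxT⟩
  have hspan : vectorSpan ℝ (range ((↑) : ↥(t.image p) → E)) ≤ A.direction := by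
    rw [Subtype.range_coe, ← direction_affineSpan]
    exact AffineSubspace.direction_le (affineSpan_le.2 (hTs.trans hA))
  calc t.card = (t.image p).card := (Finset.card_image_of_injOn hinj).symm
    _ ≤ finrank ℝ (vectorSpan ℝ (range ((↑) : ↥(t.image p) → E))) + 1 := by
      simpa using hT.card_le_finrank_succ
    _ ≤ finrank ℝ A.direction + 1 := by gcongr; exact Submodule.finrank_mono hspan

end Convex

section InnerProductSpace

variable {E : Type*} [NormedAddCommGroup E] [InnerProductSpace ℝ E]

lemma infDist_zero_eq_norm_iff {K : Set E} (hK : Convex ℝ K) {z : E} (hz : z ∈ K) :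
    infDist 0 K = ‖z‖ ↔ ∀ w ∈ K, ‖z‖ ^ 2 ≤ inner ℝ z w := by
  have h := norm_eq_iInf_iff_real_inner_le_zero hK (u := 0) hz
  simp only [zero_sub, norm_neg, inner_neg_left, inner_sub_right, real_inner_self_eq_norm_sq,
    sub_nonpos, neg_le_neg_iff] at h
  simp only [infDist_eq_iInf, dist_zero_left, eq_comm (b := ‖z‖), h]

variable [FiniteDimensional ℝ E]

lemma exists_finset_card_le_finrank_mem_convexHull_image {ι : Type*} {p : ι → E} {z : E}
    (hz₀ : z ≠ 0) (hz : z ∈ convexHull ℝ (range p)) (hp : ∀ i, ‖z‖ ^ 2 ≤ inner ℝ z (p i)) :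
    ∃ t : Finset ι, t.card ≤ finrank ℝ E ∧ z ∈ convexHull ℝ (p '' t) := by
  let H : AffineSubspace ℝ E := .mk' z (ℝ ∙ z)ᗮ
  have hH : ∀ w, w ∈ H ↔ inner ℝ z w = ‖z‖ ^ 2 := fun w => by
    rw [AffineSubspace.mem_mk', vsub_eq_sub, Submodule.mem_orthogonal_singleton_iff_inner_right,
      inner_sub_right, real_inner_self_eq_norm_sq, sub_eq_zero]
  have hzH := mem_convexHull_image_of_le (φ := innerₛₗ ℝ z) hp hz (by simp)
  obtain ⟨t, -, ht, hzt⟩ := exists_finset_card_le_mem_convexHull_image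
    (A := H) (by rintro _ ⟨i, hi, rfl⟩; exact (hH _).2 hi) hzH
  refine ⟨t, ?_, hzt⟩
  have := (ℝ ∙ z).finrank_add_finrank_orthogonal
  rw [finrank_span_singleton hz₀] at this
  rw [AffineSubspace.direction_mk'] at ht
  omega

lemma exists_update_infDist_convexHull_lt {ι : Type*} [Fintype ι] [DecidableEq ι]
    (hι : finrank ℝ E < Fintype.card ι) {C : ι → Set E} (hC : ∀ i, (0 : E) ∈ convexHull ℝ (C i))
    {X : ι → E} {z : E} (hz₀ : z ≠ 0) (hz : z ∈ convexHull ℝ (range X))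
    (hzX : infDist 0 (convexHull ℝ (range X)) = ‖z‖) :
    ∃ i₀, ∃ y ∈ C i₀, infDist 0 (convexHull ℝ (range (Function.update X i₀ y))) < ‖z‖ := by
  have hX := (infDist_zero_eq_norm_iff (convex_convexHull ℝ _) hz).1 hzX
  obtain ⟨t, ht, hzt⟩ := exists_finset_card_le_finrank_mem_convexHull_image hz₀ hz
    fun i => hX _ (subset_convexHull ℝ _ (mem_range_self i))
  obtain ⟨i₀, -, hi₀⟩ := Finset.exists_mem_notMem_of_card_lt_card
    (s := t) (t := Finset.univ) (by rw [Finset.card_univ]; omega)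
  obtain ⟨y, hy, hzy⟩ := ((innerₛₗ ℝ z).concaveOn (convex_convexHull ℝ _))
    |>.exists_le_of_mem_convexHull (subset_convexHull ℝ _) (hC i₀)
  set X' := Function.update X i₀ y
  have hzX' : z ∈ convexHull ℝ (range X') := by
    refine convexHull_mono ?_ hzt
    rintro _ ⟨i, hi, rfl⟩
    exact ⟨i, Function.update_of_ne (ne_of_mem_of_not_mem hi hi₀) _ _⟩
  have hyX' : y ∈ convexHull ℝ (range X') :=
    subset_convexHull ℝ _ ⟨i₀, Function.update_self _ _ _⟩
  refine ⟨i₀, y, hy, lt_of_le_of_ne ?_ fun h => ?_⟩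
  · simpa using infDist_le_dist_of_mem (x := 0) hzX'
  · have := (infDist_zero_eq_norm_iff (convex_convexHull ℝ _) hzX').1 h y hyX'
    rw [map_zero, innerₛₗ_apply_apply] at hzy
    exact hz₀ (by simpa using this.trans hzy)

theorem colorful_caratheodory_of_innerProductSpace {ι : Type*} [Fintype ι] {κ : ι → Type*}
    [∀ i, Finite (κ i)] (hι : finrank ℝ E < Fintype.card ι) (x : ∀ i, κ i → E)
    (hx : ∀ i, (0 : E) ∈ convexHull ℝ (range (x i))) :
    ∃ g : ∀ i, κ i, (0 : E) ∈ convexHull ℝ (range fun i => x i (g i)) := by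
  classical
  have : Nonempty ι := Fintype.card_pos_iff.1 (by omega)
  have : ∀ i, Nonempty (κ i) := fun i =>
    (convexHull_nonempty_iff.1 ⟨0, hx i⟩).to_subtype.map fun y => y.2.choose
  obtain ⟨g, hg⟩ := Finite.exists_min fun g : ∀ i, κ i =>
    infDist 0 (convexHull ℝ (range fun i => x i (g i)))
  obtain ⟨z, hz, hzg⟩ := ((finite_range fun i => x i (g i)).isCompact_convexHull ℝ)
    |>.exists_infDist_eq_dist (range_nonempty _).convexHull (0 : E)
  refine ⟨g, of_not_not fun hg₀ => ?_⟩
  have hz₀ : z ≠ 0 := by rintro rfl; exact hg₀ hz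
  obtain ⟨i₀, _, ⟨k, rfl⟩, hlt⟩ := exists_update_infDist_convexHull_lt hι
    (C := fun i => range (x i)) hx hz₀ hz (by rw [hzg, dist_zero_left])
  have hle := hg (Function.update g i₀ k)
  simp only [Function.apply_update (fun i => x i)] at hle
  rw [hzg, dist_zero_left] at hle
  exact hle.not_gt hlt

end InnerProductSpace

theorem colorful_caratheodory {E : Type*} [AddCommGroup E] [Module ℝ E] [FiniteDimensional ℝ E]
    {ι : Type*} [Fintype ι] {κ : ι → Type*} [∀ i, Finite (κ i)]
    (hι : finrank ℝ E < Fintype.card ι) (x : ∀ i, κ i → E)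
    (hx : ∀ i, (0 : E) ∈ convexHull ℝ (range (x i))) :
    ∃ g : ∀ i, κ i, (0 : E) ∈ convexHull ℝ (range fun i => x i (g i)) := by
  let e : E ≃ₗ[ℝ] EuclideanSpace ℝ (Fin (finrank ℝ E)) :=
    (finBasis ℝ E).equivFun.trans (WithLp.linearEquiv 2 ℝ _).symm
  obtain ⟨g, hg⟩ := colorful_caratheodory_of_innerProductSpace (x := fun i k => e (x i k))
    (by simpa using hι) fun i => by rw [range_comp', zero_mem_convexHull_image_iff]; exact hx i
  refine ⟨g, ?_⟩
  rwa [range_comp' e (fun i => x i (g i)), zero_mem_convexHull_image_iff] at hg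

section Sarkaria

variable (R : Type*) {M : Type*} [Ring R] [AddCommGroup M] [Module R M]

/-- `sarkaria R q j a = w_j ⊗ a` for the vectors `w_j = e_j` (`j < q`) and
`w_q = -(e_0 + ⋯ + e_(q-1))` of `R^q`. -/
def sarkaria (q : ℕ) (j : Fin (q + 1)) : M →ₗ[R] Fin q → M :=
  LinearMap.pi fun t => (if j = t.castSucc then LinearMap.id else 0) -
    if j = Fin.last q then LinearMap.id else 0

variable {R} in
lemma sarkaria_apply {q : ℕ} (j : Fin (q + 1)) (a : M) (t : Fin q) :
    sarkaria R q j a t = (if j = t.castSucc then a else 0) - if j = Fin.last q then a else 0 := by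
  simp only [sarkaria, LinearMap.pi_apply, LinearMap.sub_apply]
  split_ifs <;> rfl

lemma sum_sarkaria {q : ℕ} (U : Fin (q + 1) → M) :
    ∑ j, sarkaria R q j (U j) = fun t => U t.castSucc - U (Fin.last q) := by
  ext t
  simp [sarkaria_apply, Finset.sum_sub_distrib]

end Sarkaria

theorem tverberg {F : Type*} [AddCommGroup F] [Module ℝ F] [FiniteDimensional ℝ F]
    {ι : Type*} [Fintype ι] {q : ℕ} (hι : (finrank ℝ F + 1) * q < Fintype.card ι) (p : ι → F) :
    ∃ g : ι → Fin (q + 1), (⋂ j, convexHull ℝ (p '' {i | g i = j})).Nonempty := by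
  classical
  let A : ι → F × ℝ := fun i => (p i, 1)
  obtain ⟨g, hg⟩ := colorful_caratheodory (E := Fin q → F × ℝ) (κ := fun _ => Fin (q + 1))
    (by simpa [finrank_pi_fintype, finrank_prod, mul_comm] using hι)
    (fun i j => sarkaria ℝ q j (A i))
    fun i => zero_mem_convexHull_range_of_sum_eq_zero ((sum_sarkaria ℝ _).trans (funext fun _ => sub_self (A i)))
  obtain ⟨w, hw₀, hw₁, hw⟩ := exists_weights_of_mem_convexHull_range hg
  let U : Fin (q + 1) → F × ℝ := fun j => ∑ i with g i = j, w i • A i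
  have hU : ∀ j, U j = U (Fin.last q) := by
    have h : ∑ j, sarkaria ℝ q j (U j) = 0 := by
      rw [← hw, ← Finset.sum_fiberwise Finset.univ g]
      refine Finset.sum_congr rfl fun j _ => ?_
      rw [map_sum]
      refine Finset.sum_congr rfl fun i hi => ?_
      rw [(Finset.mem_filter.1 hi).2, map_smul]
    rw [sum_sarkaria] at h
    intro j
    induction j using Fin.lastCases with
    | last => rfl
    | cast t => exact sub_eq_zero.1 (congr_fun h t)
  set c := U (Fin.last q)
  have hc : (q + 1) * c.2 = 1 := by
    have h : ∑ j, (U j).2 = 1 := by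
      simp [U, A, Prod.snd_sum, Finset.sum_fiberwise, hw₁]
    simpa [hU] using h
  refine ⟨g, c.2⁻¹ • c.1, mem_iInter.2 fun j => ?_⟩
  have hU₁ : (U j).1 = ∑ i with g i = j, w i • p i := by simp [U, A, Prod.fst_sum]
  have hU₂ : (U j).2 = ∑ i with g i = j, w i := by simp [U, A, Prod.snd_sum]
  have h := Finset.centerMass_mem_convexHull {i | g i = j} (z := p) (s := p '' {i | g i = j})
    (fun i _ => hw₀ i) (by rw [← hU₂, hU j]; nlinarith)
    fun i hi => ⟨i, (Finset.mem_filter.1 hi).2, rfl⟩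
  rwa [Finset.centerMass, ← hU₁, ← hU₂, hU j] at h

theorem tverberg_image_finset {E F : Type*} [AddCommGroup E] [Module ℝ E] [AddCommGroup F]
    [Module ℝ F] [FiniteDimensional ℝ F] (f : E →ᵃ[ℝ] F) {V : Finset E} {q : ℕ}
    (hV : (finrank ℝ F + 1) * q < V.card) :
    ∃ S : Fin (q + 1) → Finset E, (∀ j, S j ⊆ V) ∧ (∀ j, (S j).Nonempty) ∧
      (∀ j, (S j).card ≤ finrank ℝ F + 1) ∧ Pairwise (Function.onFun Disjoint S) ∧
      (⋂ j, f '' convexHull ℝ (S j : Set E)).Nonempty := by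
  obtain ⟨g, y, hy⟩ := tverberg (p := fun v : V => f v) (by simpa using hV)
  rw [mem_iInter] at hy
  choose t hts ht hyt using fun j =>
    exists_finset_card_le_mem_convexHull_image (A := ⊤) (fun _ _ => AffineSubspace.mem_top _ _ _)
      (hy j)
  rw [AffineSubspace.direction_top, finrank_top] at ht
  refine ⟨fun j => (t j).map (.subtype _), fun j => ?_, fun j => ?_, fun j => ?_,
    fun j j' hjj' => ?_, y, mem_iInter.2 fun j => ?_⟩
  · intro _ hv
    obtain ⟨⟨v, hvV⟩, -, rfl⟩ := Finset.mem_map.1 hv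
    exact hvV
  · simpa using convexHull_nonempty_iff.1 ⟨y, hyt j⟩
  · simpa using ht j
  · simp only [Function.onFun, Finset.disjoint_map]
    exact Finset.disjoint_left.2 fun i hi hi' => hjj' ((hts j hi).symm.trans (hts j' hi'))
  · rw [AffineMap.image_convexHull, Finset.coe_map, Function.Embedding.coe_subtype, image_image]
    exact hyt j

theorem tverberg_neighborly_general (d r N : ℕ)
    (V : Finset (EuclideanSpace ℝ (Fin N)))
    (hcard : (r - 1) * (d + 1) + 1 ≤ V.card)
    (hneigh : ∀ S : Finset (EuclideanSpace ℝ (Fin N)), S ⊆ V → S.Nonempty → S.card ≤ d + 1 →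
      IsExposed ℝ (convexHull ℝ (V : Set (EuclideanSpace ℝ (Fin N))))
        (convexHull ℝ (S : Set (EuclideanSpace ℝ (Fin N)))))
    (f : EuclideanSpace ℝ (Fin N) →ᵃ[ℝ] EuclideanSpace ℝ (Fin d)) :
    ∃ S : Fin r → Finset (EuclideanSpace ℝ (Fin N)),
      (∀ j, S j ⊆ V) ∧
      (∀ j, (S j).Nonempty) ∧
      (∀ j, (S j).card ≤ d + 1) ∧
      Pairwise (Function.onFun Disjoint S) ∧
      (∀ j, IsExposed ℝ (convexHull ℝ (V : Set (EuclideanSpace ℝ (Fin N))))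
        (convexHull ℝ (S j : Set (EuclideanSpace ℝ (Fin N))))) ∧
      (⋂ j, f '' convexHull ℝ (S j : Set (EuclideanSpace ℝ (Fin N)))).Nonempty := by
  rcases r with _ | q
  · exact ⟨finZeroElim, by simp [Pairwise]⟩
  obtain ⟨S, hSV, hS, hScard, hdisj, hy⟩ := tverberg_image_finset f (q := q) (V := V)
    (by rw [finrank_euclideanSpace_fin]; simp only [Nat.add_sub_cancel] at hcard; linarith)
  rw [finrank_euclideanSpace_fin] at hScard
  exact ⟨S, hSV, hS, hScard, hdisj, fun j => hneigh _ (hSV j) (hS j) (hScard j), hy⟩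

/-- Tverberg's theorem for `(d+1)`-neighborly polytopes: if `r ≥ 3`, `|V| ≥ (r-1)(d+1)+1`
and `P = conv V` is `(d+1)`-neighborly with vertex set `V` (the convex hull of every
nonempty subset of `V` of size at most `d+1` is a face of `P`), then for every affine map
`f : ℝ^N → ℝ^d` there are `r` pairwise disjoint faces of `P` of the form `conv S_j`,
`S_j ⊆ V` nonempty of size at most `d+1`, whose images under `f` intersect. -/
theorem tverberg_neighborly (d r N : ℕ) (hd : 1 ≤ d) (hr : 3 ≤ r)
    (V : Finset (EuclideanSpace ℝ (Fin N)))
    (hcard : (r - 1) * (d + 1) + 1 ≤ V.card)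
    (hneigh : ∀ S : Finset (EuclideanSpace ℝ (Fin N)), S ⊆ V → S.Nonempty → S.card ≤ d + 1 →
      IsExposed ℝ (convexHull ℝ (V : Set (EuclideanSpace ℝ (Fin N))))
        (convexHull ℝ (S : Set (EuclideanSpace ℝ (Fin N)))))
    (f : EuclideanSpace ℝ (Fin N) →ᵃ[ℝ] EuclideanSpace ℝ (Fin d)) :
    ∃ S : Fin r → Finset (EuclideanSpace ℝ (Fin N)),
      (∀ j, S j ⊆ V) ∧
      (∀ j, (S j).Nonempty) ∧
      (∀ j, (S j).card ≤ d + 1) ∧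
      Pairwise (Function.onFun Disjoint S) ∧
      (∀ j, IsExposed ℝ (convexHull ℝ (V : Set (EuclideanSpace ℝ (Fin N))))
        (convexHull ℝ (S j : Set (EuclideanSpace ℝ (Fin N))))) ∧
      (⋂ j, f '' convexHull ℝ (S j : Set (EuclideanSpace ℝ (Fin N)))).Nonempty :=
  tverberg_neighborly_general d r N V hcard hneigh f
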